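/- Let N ≥ 2, let V ∈ L¹(ℝ), and let 1 ≤ i < j ≤ N. Then for every ψ ∈ C_c^∞(ℝ^N): |∫_{ℝ^N} V(x_j − x_i) |ψ(x)|² dx| ≤ ‖V‖_{L¹} · ‖∇ψ‖_{L²} · ‖ψ‖_{L²}. -/

import Mathlib

open MeasureTheory

theorem abs_int_le {α : Type*} [MeasurableSpace α] (μ : Measure α) (g : α → ℝ) : |∫ x, g x ∂μ| ≤ ∫ x, |g x| ∂μ := by
  simpa [Real.norm_eq_abs] using norm_integral_le_integral_norm (μ := μ) g

theorem onedim_trace (f : ℝ → ℝ) (hf : ContDiff ℝ 1 f) (hcf : HasCompactSupport f) (c : ℝ) :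
    f c ^ 2 ≤ ∫ t : ℝ, |f t| * |deriv f t| := by
  have hF : ContDiff ℝ 1 (fun t => f t ^ 2) := hf.pow 2
  have hcF : HasCompactSupport (fun t => f t ^ 2) := by
    simpa [pow_two, Pi.mul_def] using hcf.mul_left (f := f)
  have hdF : deriv (fun t => f t ^ 2) = fun t => 2 * f t * deriv f t := by
    funext t
    have : HasDerivAt (fun t => f t ^ 2) ((2 : ℕ) * f t ^ (2 - 1) * deriv f t) t :=
      ((hf.differentiable one_ne_zero t).hasDerivAt).pow 2
    simpa using this.deriv
  have h1 : ∫ t in Set.Iic c, deriv (fun t => f t ^ 2) t = f c ^ 2 :=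
    hcF.integral_Iic_deriv_eq hF c
  have h2 : ∫ t in Set.Ioi c, deriv (fun t => f t ^ 2) t = -(f c ^ 2) :=
    hcF.integral_Ioi_deriv_eq hF c
  have habs : Integrable (fun t => |deriv (fun t => f t ^ 2) t|) := by
    refine (Continuous.integrable_of_hasCompactSupport ?_ ?_).abs
    · exact hF.continuous_deriv le_rfl
    · exact hcF.deriv
  have key : 2 * f c ^ 2 ≤ ∫ t : ℝ, |deriv (fun t => f t ^ 2) t| := by
    have e1 : f c ^ 2 ≤ ∫ t in Set.Iic c, |deriv (fun t => f t ^ 2) t| := by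
      rw [← h1]
      exact (le_abs_self _).trans (abs_int_le _ _)
    have e2 : f c ^ 2 ≤ ∫ t in Set.Ioi c, |deriv (fun t => f t ^ 2) t| := by
      have : f c ^ 2 = -(∫ t in Set.Ioi c, deriv (fun t => f t ^ 2) t) := by rw [h2]; ring
      rw [this]
      exact (neg_le_abs _).trans (abs_int_le _ _)
    have hsplit : (∫ t in Set.Iic c, |deriv (fun t => f t ^ 2) t|) +
        (∫ t in Set.Ioi c, |deriv (fun t => f t ^ 2) t|) = ∫ t : ℝ, |deriv (fun t => f t ^ 2) t| := by
      have := integral_add_compl (measurableSet_Iic (a := c)) habs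
      simpa [Set.compl_Iic] using this
    linarith
  have : ∫ t : ℝ, |deriv (fun t => f t ^ 2) t| = 2 * ∫ t : ℝ, |f t| * |deriv f t| := by
    rw [← integral_const_mul]
    congr 1
    funext t
    rw [hdF]
    simp [abs_mul, mul_assoc]
  linarith [key, this]

def toE {n : ℕ} (x : Fin n → ℝ) : EuclideanSpace ℝ (Fin n) := WithLp.toLp 2 x

theorem coord_le_norm {ι : Type*} [Fintype ι] (x : EuclideanSpace ℝ ι) (i : ι) :
    |x i| ≤ ‖x‖ := by
  rw [EuclideanSpace.norm_eq]
  rw [show |x i| = Real.sqrt (|x i| ^ 2) by rw [Real.sqrt_sq_eq_abs, abs_abs]]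
  apply Real.sqrt_le_sqrt
  exact Finset.single_le_sum (f := fun i => |x i| ^ 2) (fun k _ => sq_nonneg _)
    (Finset.mem_univ i)

theorem insertNth_affine {n : ℕ} (j : Fin (n + 1)) (t : ℝ) (y : Fin n → ℝ) :
    toE (Fin.insertNth j t y) =
      toE (Fin.insertNth j 0 y) + t • (EuclideanSpace.single j (1 : ℝ)) := by
  ext k
  rcases eq_or_ne k j with rfl | hk
  · simp [toE, PiLp.add_apply, PiLp.smul_apply]
  · obtain ⟨k', rfl⟩ := Fin.exists_succAbove_eq hk
    simp [toE, PiLp.add_apply, PiLp.smul_apply, EuclideanSpace.single_apply,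
      Fin.succAbove_ne j k']

theorem slice_hasDerivAt {n : ℕ} (j : Fin (n + 1)) (ψ : EuclideanSpace ℝ (Fin (n + 1)) → ℝ)
    (hψ : ContDiff ℝ (⊤ : ℕ∞) ψ) (y : Fin n → ℝ) (t : ℝ) :
    HasDerivAt (fun s => ψ (toE (Fin.insertNth j s y)))
      (fderiv ℝ ψ (toE (Fin.insertNth j t y)) (EuclideanSpace.single j (1 : ℝ))) t := by
  have h1 : HasDerivAt (fun s : ℝ => toE (Fin.insertNth j 0 y) +
      s • (EuclideanSpace.single j (1 : ℝ))) (EuclideanSpace.single j (1 : ℝ)) t := by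
    simpa using (((hasDerivAt_id t).smul_const (EuclideanSpace.single j (1 : ℝ)))).const_add
      (toE (Fin.insertNth j 0 y))
  have h2 := ((hψ.differentiable (by simp) _).hasFDerivAt).comp_hasDerivAt t h1
  simp_rw [← insertNth_affine] at h2
  exact h2

theorem slice_contDiff {n : ℕ} (j : Fin (n + 1)) (ψ : EuclideanSpace ℝ (Fin (n + 1)) → ℝ)
    (hψ : ContDiff ℝ (⊤ : ℕ∞) ψ) (y : Fin n → ℝ) :
    ContDiff ℝ 1 (fun s => ψ (toE (Fin.insertNth j s y))) := by
  have : ContDiff ℝ 1 (fun s : ℝ => toE (Fin.insertNth j 0 y) +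
      s • (EuclideanSpace.single j (1 : ℝ))) :=
    contDiff_const.add (contDiff_id.smul contDiff_const)
  have h := (hψ.of_le (by simp)).comp this
  simpa [← insertNth_affine, Function.comp_def] using h

theorem slice_compact_support {n : ℕ} (j : Fin (n + 1))
    (ψ : EuclideanSpace ℝ (Fin (n + 1)) → ℝ) (hc : HasCompactSupport ψ) (y : Fin n → ℝ)
    (F : ℝ → ℝ) (hF : ∀ t, F t ≠ 0 → ψ (toE (Fin.insertNth j t y)) ≠ 0) :
    HasCompactSupport F := by
  obtain ⟨R, hR⟩ := hc.isCompact.isBounded.subset_closedBall 0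
  apply HasCompactSupport.intro (isCompact_closedBall (0 : ℝ) R)
  intro t ht
  by_contra h
  have h1 : toE (Fin.insertNth j t y) ∈ tsupport ψ := subset_tsupport ψ (hF t h)
  have h2 : ‖toE (Fin.insertNth j t y)‖ ≤ R := by
    have := hR h1
    simpa [Metric.mem_closedBall] using this
  have h3 : |t| ≤ R := by
    have h4 := coord_le_norm (toE (Fin.insertNth j t y)) j
    have e : toE (Fin.insertNth j t y) j = t := by simp [toE]
    rw [e] at h4
    linarith
  exact ht (by simpa [Metric.mem_closedBall, Real.dist_eq] using h3)

theorem slice_trace_bound {n : ℕ} (j : Fin (n + 1)) (ψ : EuclideanSpace ℝ (Fin (n + 1)) → ℝ)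
    (hψ : ContDiff ℝ (⊤ : ℕ∞) ψ) (hc : HasCompactSupport ψ) (y : Fin n → ℝ) (c : ℝ) :
    ψ (toE (Fin.insertNth j c y)) ^ 2 ≤
      ∫ t : ℝ, |ψ (toE (Fin.insertNth j t y))| * ‖fderiv ℝ ψ (toE (Fin.insertNth j t y))‖ := by
  set f : ℝ → ℝ := fun s => ψ (toE (Fin.insertNth j s y)) with hf
  have hcd : ContDiff ℝ 1 f := slice_contDiff j ψ hψ y
  have hcs : HasCompactSupport f := slice_compact_support j ψ hc y f (fun t h => h)
  have h1 : f c ^ 2 ≤ ∫ t : ℝ, |f t| * |deriv f t| := onedim_trace f hcd hcs c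
  refine h1.trans ?_
  have hΦcont : Continuous (fun s : ℝ => toE (Fin.insertNth j s y)) := by
    have : Continuous (fun s : ℝ => toE (Fin.insertNth j 0 y) +
        s • (EuclideanSpace.single j (1 : ℝ))) :=
      continuous_const.add (continuous_id.smul continuous_const)
    simpa [← insertNth_affine] using this
  apply integral_mono_of_nonneg
  · exact Filter.Eventually.of_forall fun t => mul_nonneg (abs_nonneg _) (abs_nonneg _)
  · apply Continuous.integrable_of_hasCompactSupport
    · exact ((hψ.continuous.comp hΦcont).abs.mul
        (((hψ.continuous_fderiv (by simp)).comp hΦcont).norm))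
    · apply slice_compact_support j ψ hc y
      intro t h
      intro h0
      apply h
      simp [h0]
  · refine Filter.Eventually.of_forall fun t => ?_
    dsimp only
    have hd : deriv f t = fderiv ℝ ψ (toE (Fin.insertNth j t y)) (EuclideanSpace.single j 1) :=
      (slice_hasDerivAt j ψ hψ y t).deriv
    rw [hd]
    apply mul_le_mul_of_nonneg_left _ (abs_nonneg _)
    calc |fderiv ℝ ψ (toE (Fin.insertNth j t y)) (EuclideanSpace.single j 1)|
        ≤ ‖fderiv ℝ ψ (toE (Fin.insertNth j t y))‖ * ‖EuclideanSpace.single j (1 : ℝ)‖ := by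
          simpa [Real.norm_eq_abs] using
            (fderiv ℝ ψ (toE (Fin.insertNth j t y))).le_opNorm (EuclideanSpace.single j 1)
      _ = ‖fderiv ℝ ψ (toE (Fin.insertNth j t y))‖ := by
          rw [EuclideanSpace.norm_single]; simp

theorem null_pre {n : ℕ} (j : Fin (n + 1)) (i' : Fin n) {s : Set ℝ} (hs : volume s = 0) :
    volume {x : EuclideanSpace ℝ (Fin (n + 1)) | x j - x (j.succAbove i') ∈ s} = 0 := by
  obtain ⟨t, hst, htm, ht0⟩ := exists_measurable_superset_of_null hs
  set qe : EuclideanSpace ℝ (Fin (n + 1)) ≃ᵐ ℝ × (Fin n → ℝ) :=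
    (MeasurableEquiv.toLp 2 (Fin (n + 1) → ℝ)).symm.trans
      (MeasurableEquiv.piFinSuccAbove (fun _ => ℝ) j) with hqe
  have qmp : MeasurePreserving (⇑qe) volume volume := by
    exact (volume_preserving_piFinSuccAbove (fun _ : Fin (n + 1) => ℝ) j).comp
      (EuclideanSpace.volume_preserving_symm_measurableEquiv_toLp (Fin (n + 1)))
  set B : Set (ℝ × (Fin n → ℝ)) := {p | p.1 - p.2 i' ∈ t} with hB
  have hBm : MeasurableSet B :=
    htm.preimage (measurable_fst.sub ((measurable_pi_apply i').comp measurable_snd))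
  have hsub : {x : EuclideanSpace ℝ (Fin (n + 1)) | x j - x (j.succAbove i') ∈ s} ⊆ ⇑qe ⁻¹' B := by
    intro x hx
    exact hst hx
  refine measure_mono_null hsub ?_
  rw [qmp.measure_preimage hBm.nullMeasurableSet]
  rw [show (volume : Measure (ℝ × (Fin n → ℝ))) = (volume : Measure ℝ).prod volume from rfl]
  rw [Measure.prod_apply_symm hBm]
  have : ∀ y : Fin n → ℝ, volume ((fun x : ℝ => (x, y)) ⁻¹' B) = 0 := by
    intro y
    have : ((fun x : ℝ => (x, y)) ⁻¹' B) = (fun x : ℝ => x - y i') ⁻¹' t := rfl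
    rw [this, (measurePreserving_sub_right volume (y i')).measure_preimage
      htm.nullMeasurableSet]
    exact ht0
  simp [this]

theorem interaction_form_bound (N : ℕ) (V : ℝ → ℝ) (hV : Integrable V)
    (i j : Fin N) (hij : i < j)
    (ψ : EuclideanSpace ℝ (Fin N) → ℝ) (hψ : ContDiff ℝ (⊤ : ℕ∞) ψ) (hc : HasCompactSupport ψ) :
    |∫ x : EuclideanSpace ℝ (Fin N), V (x j - x i) * (ψ x) ^ 2|
      ≤ (∫ r : ℝ, |V r|) *
          ((∫ x : EuclideanSpace ℝ (Fin N), ‖fderiv ℝ ψ x‖ ^ 2) ^ ((1 : ℝ) / 2) *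
            (∫ x : EuclideanSpace ℝ (Fin N), (ψ x) ^ 2) ^ ((1 : ℝ) / 2)) := by
  obtain ⟨n, rfl⟩ : ∃ n, N = n + 1 := ⟨N - 1, (Nat.succ_pred_eq_of_pos j.pos).symm⟩
  obtain ⟨i', rfl⟩ : ∃ i', j.succAbove i' = i := Fin.exists_succAbove_eq (ne_of_lt hij)
  -- replace V by a strongly measurable representative
  set V₀ := hV.1.mk V with hV₀def
  have hV₀sm : StronglyMeasurable V₀ := hV.1.stronglyMeasurable_mk
  have hVae : V =ᵐ[volume] V₀ := hV.1.ae_eq_mk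
  have hV₀int : Integrable V₀ := hV.congr hVae
  have hV₀m : Measurable V₀ := hV₀sm.measurable
  have hs0 : volume {r : ℝ | ¬ V r = V₀ r} = 0 := by
    have := hVae
    rw [Filter.EventuallyEq, ae_iff] at this
    exact this
  have hxae : ∀ᵐ x : EuclideanSpace ℝ (Fin (n + 1)),
      V (x j - x (j.succAbove i')) = V₀ (x j - x (j.succAbove i')) := by
    rw [ae_iff]
    exact measure_mono_null (fun x hx => hx) (null_pre j i' hs0)
  have hL : ∫ x : EuclideanSpace ℝ (Fin (n + 1)), V (x j - x (j.succAbove i')) * ψ x ^ 2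
      = ∫ x : EuclideanSpace ℝ (Fin (n + 1)), V₀ (x j - x (j.succAbove i')) * ψ x ^ 2 :=
    integral_congr_ae (hxae.mono fun x hx => by dsimp only; rw [hx])
  have hVnorm : ∫ r : ℝ, |V r| = ∫ r : ℝ, |V₀ r| :=
    integral_congr_ae (hVae.mono fun r hr => by dsimp only; rw [hr])
  rw [hL, hVnorm]
  -- setup
  set gfun : EuclideanSpace ℝ (Fin (n + 1)) → ℝ := fun x => |ψ x| * ‖fderiv ℝ ψ x‖ with hgfun
  have hg_cont : Continuous gfun := hψ.continuous.abs.mul (hψ.continuous_fderiv (by simp)).norm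
  have hg_cs : HasCompactSupport gfun := by
    apply HasCompactSupport.mul_right
    exact hc.comp_left (g := fun r : ℝ => |r|) abs_zero
  have hg_int : Integrable gfun := hg_cont.integrable_of_hasCompactSupport hg_cs
  set qe : EuclideanSpace ℝ (Fin (n + 1)) ≃ᵐ ℝ × (Fin n → ℝ) :=
    (MeasurableEquiv.toLp 2 (Fin (n + 1) → ℝ)).symm.trans
      (MeasurableEquiv.piFinSuccAbove (fun _ => ℝ) j) with hqe
  have qmp : MeasurePreserving (⇑qe) volume volume := by
    exact (volume_preserving_piFinSuccAbove (fun _ : Fin (n + 1) => ℝ) j).comp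
      (EuclideanSpace.volume_preserving_symm_measurableEquiv_toLp (Fin (n + 1)))
  set Φ : ℝ × (Fin n → ℝ) → EuclideanSpace ℝ (Fin (n + 1)) :=
    fun p => toE (Fin.insertNth j p.1 p.2) with hΦ
  have hqs : ⇑qe.symm = Φ := funext fun p => rfl
  have hEq1 : ∀ g : EuclideanSpace ℝ (Fin (n + 1)) → ℝ,
      ∫ p : ℝ × (Fin n → ℝ), g (Φ p) = ∫ x : EuclideanSpace ℝ (Fin (n + 1)), g x := by
    intro g
    rw [← hqs]
    exact (qmp.symm).integral_comp qe.symm.measurableEmbedding g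
  have hvol : (volume : Measure (ℝ × (Fin n → ℝ))) = (volume : Measure ℝ).prod volume := rfl
  -- T and its properties
  set T : (Fin n → ℝ) → ℝ := fun y => ∫ t : ℝ, gfun (Φ (t, y)) with hT
  have hT_nonneg : ∀ y, 0 ≤ T y := fun y =>
    integral_nonneg fun t => mul_nonneg (abs_nonneg _) (norm_nonneg _)
  have hF_int : Integrable (fun p : ℝ × (Fin n → ℝ) => gfun (Φ p)) volume := by
    rw [← hqs]
    exact ((qmp.symm).integrable_comp_emb qe.symm.measurableEmbedding).2 hg_int
  have hF_int' : Integrable (fun p : ℝ × (Fin n → ℝ) => gfun (Φ p))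
      ((volume : Measure ℝ).prod volume) := by rwa [← hvol]
  have hF_sm : StronglyMeasurable (fun p : ℝ × (Fin n → ℝ) => gfun (Φ p)) := by
    rw [← hqs]
    exact (hg_cont.measurable.comp qe.symm.measurable).stronglyMeasurable
  have hT_sm : StronglyMeasurable T := hF_sm.integral_prod_left'
  have hT_int : Integrable T := hF_int'.integral_prod_right
  -- W and its integrability
  set W : ℝ × (Fin n → ℝ) → ℝ := fun p => |V₀ (p.1 - p.2 i')| * T p.2 with hW
  have hW_meas : AEStronglyMeasurable W ((volume : Measure ℝ).prod volume) := by
    apply Measurable.aestronglyMeasurable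
    exact ((hV₀m.comp (measurable_fst.sub
      ((measurable_pi_apply i').comp measurable_snd))).abs).mul
      (hT_sm.measurable.comp measurable_snd)
  have hWinner : ∀ y : Fin n → ℝ, ∫ s : ℝ, |V₀ (s - y i')| * T y
      = (∫ r : ℝ, |V₀ r|) * T y := by
    intro y
    rw [integral_mul_const]
    congr 1
    exact integral_sub_right_eq_self (fun r => |V₀ r|) (y i')
  have hW_int : Integrable W ((volume : Measure ℝ).prod volume) := by
    rw [integrable_prod_iff' hW_meas]
    constructor
    · exact Filter.Eventually.of_forall fun y =>
        ((hV₀int.comp_sub_right (y i')).abs.mul_const (T y))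
    · have : (fun y : Fin n → ℝ => ∫ s : ℝ, ‖W (s, y)‖)
          = fun y => (∫ r : ℝ, |V₀ r|) * T y := by
        funext y
        rw [← hWinner y]
        congr 1
        funext s
        simp [hW, Real.norm_eq_abs, abs_mul, abs_abs, abs_of_nonneg (hT_nonneg y)]
      rw [this]
      exact hT_int.const_mul _
  -- Hölder
  have hHolder : ∫ x : EuclideanSpace ℝ (Fin (n + 1)), gfun x
      ≤ (∫ x : EuclideanSpace ℝ (Fin (n + 1)), ‖fderiv ℝ ψ x‖ ^ 2) ^ ((1 : ℝ) / 2) *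
        (∫ x : EuclideanSpace ℝ (Fin (n + 1)), (ψ x) ^ 2) ^ ((1 : ℝ) / 2) := by
    have h22 : (2 : ℝ).HolderConjugate 2 := Real.holderConjugate_iff.mpr ⟨one_lt_two, by norm_num⟩
    have hf2 : MemLp (fderiv ℝ ψ) (ENNReal.ofReal 2) volume :=
      ((hψ.continuous_fderiv (by simp)).memLp_of_hasCompactSupport (hc.fderiv (𝕜 := ℝ)))
    have hg2 : MemLp ψ (ENNReal.ofReal 2) volume :=
      (hψ.continuous.memLp_of_hasCompactSupport hc)
    have h := integral_mul_le_Lp_mul_Lq_of_nonneg h22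
      (Filter.Eventually.of_forall fun x => norm_nonneg (fderiv ℝ ψ x))
      (Filter.Eventually.of_forall fun x => norm_nonneg (ψ x)) hf2.norm hg2.norm
    have e1 : ∫ x : EuclideanSpace ℝ (Fin (n + 1)), ‖fderiv ℝ ψ x‖ * ‖ψ x‖
        = ∫ x : EuclideanSpace ℝ (Fin (n + 1)), gfun x := by
      congr 1; funext x; simp [hgfun, Real.norm_eq_abs]; ring
    have e2 : ∫ x : EuclideanSpace ℝ (Fin (n + 1)), ‖fderiv ℝ ψ x‖ ^ (2 : ℝ)
        = ∫ x : EuclideanSpace ℝ (Fin (n + 1)), ‖fderiv ℝ ψ x‖ ^ 2 := by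
      congr 1; funext x
      rw [show (2 : ℝ) = ((2 : ℕ) : ℝ) by norm_num, Real.rpow_natCast]
    have e3 : ∫ x : EuclideanSpace ℝ (Fin (n + 1)), ‖ψ x‖ ^ (2 : ℝ)
        = ∫ x : EuclideanSpace ℝ (Fin (n + 1)), (ψ x) ^ 2 := by
      congr 1; funext x
      rw [show (2 : ℝ) = ((2 : ℕ) : ℝ) by norm_num, Real.rpow_natCast,
        Real.norm_eq_abs, sq_abs]
    rw [e1, e2, e3] at h
    exact h
  -- main chain
  calc |∫ x : EuclideanSpace ℝ (Fin (n + 1)), V₀ (x j - x (j.succAbove i')) * ψ x ^ 2|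
      ≤ ∫ x : EuclideanSpace ℝ (Fin (n + 1)), |V₀ (x j - x (j.succAbove i')) * ψ x ^ 2| :=
        abs_int_le _ _
    _ = ∫ x : EuclideanSpace ℝ (Fin (n + 1)), |V₀ (x j - x (j.succAbove i'))| * ψ x ^ 2 := by
        congr 1; funext x; rw [abs_mul, abs_pow, sq_abs]
    _ = ∫ p : ℝ × (Fin n → ℝ), |V₀ (p.1 - p.2 i')| * ψ (Φ p) ^ 2 := by
        rw [← hEq1 (fun x => |V₀ (x j - x (j.succAbove i'))| * ψ x ^ 2)]
        congr 1
        funext p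
        simp only [hΦ, toE, Fin.insertNth_apply_same, Fin.insertNth_apply_succAbove]
    _ ≤ ∫ p : ℝ × (Fin n → ℝ), W p := by
        apply integral_mono_of_nonneg
        · exact Filter.Eventually.of_forall fun p =>
            mul_nonneg (abs_nonneg _) (sq_nonneg _)
        · rwa [hvol]
        · refine Filter.Eventually.of_forall fun p => ?_
          dsimp only
          apply mul_le_mul_of_nonneg_left _ (abs_nonneg _)
          exact slice_trace_bound j ψ hψ hc p.2 p.1
    _ = ∫ y : Fin n → ℝ, ∫ s : ℝ, W (s, y) := by
        rw [hvol]
        exact integral_prod_symm W hW_int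
    _ = ∫ y : Fin n → ℝ, (∫ r : ℝ, |V₀ r|) * T y := by
        congr 1; funext y; exact hWinner y
    _ = (∫ r : ℝ, |V₀ r|) * ∫ y : Fin n → ℝ, T y := integral_const_mul _ _
    _ = (∫ r : ℝ, |V₀ r|) * ∫ x : EuclideanSpace ℝ (Fin (n + 1)), gfun x := by
        congr 1
        rw [← hEq1 gfun]
        rw [hvol]
        exact (integral_prod_symm _ hF_int').symm
    _ ≤ (∫ r : ℝ, |V₀ r|) *
        ((∫ x : EuclideanSpace ℝ (Fin (n + 1)), ‖fderiv ℝ ψ x‖ ^ 2) ^ ((1 : ℝ) / 2) *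
          (∫ x : EuclideanSpace ℝ (Fin (n + 1)), (ψ x) ^ 2) ^ ((1 : ℝ) / 2)) := by
        apply mul_le_mul_of_nonneg_left hHolder
        exact integral_nonneg fun r => abs_nonneg _
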